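/- arXiv:2508.19900 — 3 statements merged into one kernel-verified Lean document; each statement's English description precedes it below -/
import Mathlib

section
/- Under the stated assumptions, (ΔQ)² ≤ L_Q² · (c + √(c² + ΔL_BC))². (This is the upper-bound half of Proposition 1 of the paper.) -/
open MeasureTheory Real

/-!
By the Lipschitz bound and the triangle inequality through `π_β`,
`|ΔQ| ≤ L_Q (𝔼‖π₊ - π_β‖ + 𝔼‖π - π_β‖)`. On a probability space `𝔼 f ≤ √(𝔼 f²)`, so the
bracket is at most `√L₊^BC + √L^BC`, and `L₊^BC ≤ L^BC + ΔL_BC = c² + ΔL_BC`.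
-/

section

variable {α : Type*} [MeasurableSpace α] {μ : Measure α}

lemma sq_integral_le_integral_sq [IsProbabilityMeasure μ] {f : α → ℝ} (hf : MemLp f 2 μ) :
    (∫ a, f a ∂μ) ^ 2 ≤ ∫ a, f a ^ 2 ∂μ := by
  have := ProbabilityTheory.variance_nonneg f μ
  rw [ProbabilityTheory.variance_eq_sub hf] at this
  simpa [sub_nonneg] using this

lemma memLp_two_norm_of_integrable_norm_sq {E : Type*} [NormedAddCommGroup E] {g : α → E}
    (hg : Integrable (fun a => ‖g a‖ ^ 2) μ) : MemLp (fun a => ‖g a‖) 2 μ := by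
  -- `‖g‖ = √(‖g‖²)`, so `g` itself need not be measurable.
  have hmeas : AEStronglyMeasurable (fun a => ‖g a‖) μ :=
    (continuous_sqrt.comp_aestronglyMeasurable hg.aestronglyMeasurable).congr
      (.of_forall fun a => sqrt_sq (norm_nonneg (g a)))
  exact (memLp_two_iff_integrable_sq hmeas).2 hg

lemma integral_norm_le_sqrt_integral_norm_sq [IsProbabilityMeasure μ] {E : Type*}
    [NormedAddCommGroup E] {g : α → E} (hg : Integrable (fun a => ‖g a‖ ^ 2) μ) :
    ∫ a, ‖g a‖ ∂μ ≤ √(∫ a, ‖g a‖ ^ 2 ∂μ) :=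
  (le_abs_self _).trans <|
    abs_le_sqrt (sq_integral_le_integral_sq (memLp_two_norm_of_integrable_norm_sq hg))

lemma abs_integral_sub_le_of_lipschitz {E : Type*} [NormedAddCommGroup E]
    {Q : α → E → ℝ} {K : ℝ} (hK : 0 ≤ K) (hQ : ∀ a x y, |Q a x - Q a y| ≤ K * ‖x - y‖)
    {f g h : α → E} (hf : Integrable (fun a => ‖f a - h a‖) μ)
    (hg : Integrable (fun a => ‖g a - h a‖) μ) :
    |∫ a, (Q a (f a) - Q a (g a)) ∂μ| ≤
      K * (∫ a, ‖f a - h a‖ ∂μ + ∫ a, ‖g a - h a‖ ∂μ) := by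
  have hpointwise : ∀ a, |Q a (f a) - Q a (g a)| ≤ K * (‖f a - h a‖ + ‖g a - h a‖) := fun a =>
    calc |Q a (f a) - Q a (g a)| ≤ K * ‖f a - g a‖ := hQ a _ _
      _ ≤ K * (‖f a - h a‖ + ‖g a - h a‖) :=
        mul_le_mul_of_nonneg_left (norm_sub_le_norm_sub_add_norm_sub _ _ _ |>.trans_eq
          (by rw [norm_sub_rev (h a)])) hK
  calc |∫ a, (Q a (f a) - Q a (g a)) ∂μ| ≤ ∫ a, |Q a (f a) - Q a (g a)| ∂μ :=
        abs_integral_le_integral_abs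
    _ ≤ ∫ a, K * (‖f a - h a‖ + ‖g a - h a‖) ∂μ :=
        integral_mono_of_nonneg (.of_forall fun a => abs_nonneg _)
          ((hf.add hg).const_mul K) (.of_forall hpointwise)
    _ = K * (∫ a, ‖f a - h a‖ ∂μ + ∫ a, ‖g a - h a‖ ∂μ) := by
        rw [integral_const_mul, integral_add hf hg]

end

lemma sqrt_le_sqrt_sq_add_abs_sub {a b : ℝ} (hb : 0 ≤ b) : √a ≤ √(√b ^ 2 + |a - b|) := by
  rw [sq_sqrt hb]
  exact sqrt_le_sqrt (by linarith [le_abs_self (a - b)])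

theorem stmt_1_general
    {S : Type*} [MeasurableSpace S] (μ : Measure S) [IsProbabilityMeasure μ]
    {H : Type*} [NormedAddCommGroup H]
    (πp πt πβ : S → H)
    (hint₁ : Integrable (fun s => ‖πp s - πβ s‖ ^ 2) μ)
    (hint₂ : Integrable (fun s => ‖πt s - πβ s‖ ^ 2) μ)
    (L_Q : ℝ) (hL_Q : 0 < L_Q)
    (Q : S → H → ℝ)
    (hLip : ∀ s a₁ a₂, |Q s a₁ - Q s a₂| ≤ L_Q * ‖a₁ - a₂‖)
    (LpBC LBC ΔL c ΔQ : ℝ)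
    (hLpBC : LpBC = ∫ s, ‖πp s - πβ s‖ ^ 2 ∂μ)
    (hLBC : LBC = ∫ s, ‖πt s - πβ s‖ ^ 2 ∂μ)
    (hΔL : ΔL = |LpBC - LBC|)
    (hc : c = Real.sqrt LBC)
    (hΔQ : ΔQ = ∫ s, (Q s (πp s) - Q s (πt s)) ∂μ) :
    ΔQ ^ 2 ≤ L_Q ^ 2 * (c + Real.sqrt (c ^ 2 + ΔL)) ^ 2 := by
  subst hc
  have hLBC_nonneg : 0 ≤ LBC := hLBC ▸ integral_nonneg fun s => sq_nonneg _
  have hLpBC_le : √LpBC ≤ √(√LBC ^ 2 + ΔL) := hΔL ▸ sqrt_le_sqrt_sq_add_abs_sub hLBC_nonneg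
  have hΔQ_le : |ΔQ| ≤ L_Q * (√LpBC + √LBC) := by
    rw [hΔQ, hLpBC, hLBC]
    refine (abs_integral_sub_le_of_lipschitz hL_Q.le hLip
      ((memLp_two_norm_of_integrable_norm_sq hint₁).integrable one_le_two)
      ((memLp_two_norm_of_integrable_norm_sq hint₂).integrable one_le_two)).trans ?_
    gcongr
    exacts [integral_norm_le_sqrt_integral_norm_sq hint₁,
      integral_norm_le_sqrt_integral_norm_sq hint₂]
  calc ΔQ ^ 2 = |ΔQ| ^ 2 := (sq_abs _).symm
    _ ≤ (L_Q * (√LpBC + √LBC)) ^ 2 := by gcongr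
    _ ≤ L_Q ^ 2 * (√LBC + √(√LBC ^ 2 + ΔL)) ^ 2 := by
      rw [mul_pow]
      gcongr ?_ * ?_ ^ 2
      linarith

/-- Upper-bound half of Proposition 1: `(ΔQ)² ≤ L_Q² · (c + √(c² + ΔL_BC))²`. -/
theorem stmt_1
    {S : Type*} [MeasurableSpace S] (μ : Measure S) [IsProbabilityMeasure μ]
    {H : Type*} [NormedAddCommGroup H] [InnerProductSpace ℝ H]
    [MeasurableSpace H] [BorelSpace H]
    (πp πt πβ : S → H)
    (hπp : Measurable πp) (hπ : Measurable πt) (hπβ : Measurable πβ)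
    (hint₁ : Integrable (fun s => ‖πp s - πβ s‖ ^ 2) μ)
    (hint₂ : Integrable (fun s => ‖πt s - πβ s‖ ^ 2) μ)
    (hint₃ : Integrable (fun s => ‖πp s - πt s‖ ^ 2) μ)
    (L_Q : ℝ) (hL_Q : 0 < L_Q)
    (Q : S → H → ℝ)
    (hLip : ∀ s a₁ a₂, |Q s a₁ - Q s a₂| ≤ L_Q * ‖a₁ - a₂‖)
    (hQ₁ : Integrable (fun s => Q s (πp s)) μ)
    (hQ₂ : Integrable (fun s => Q s (πt s)) μ)
    (LpBC LBC ΔL x c ΔQ : ℝ)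
    (hLpBC : LpBC = ∫ s, ‖πp s - πβ s‖ ^ 2 ∂μ)
    (hLBC : LBC = ∫ s, ‖πt s - πβ s‖ ^ 2 ∂μ)
    (hΔL : ΔL = |LpBC - LBC|)
    (hx : x = ∫ s, ‖πp s - πt s‖ ^ 2 ∂μ)
    (hc : c = Real.sqrt LBC)
    (hΔQ : ΔQ = ∫ s, (Q s (πp s) - Q s (πt s)) ∂μ) :
    ΔQ ^ 2 ≤ L_Q ^ 2 * (c + Real.sqrt (c ^ 2 + ΔL)) ^ 2 :=
  stmt_1_general μ πp πt πβ hint₁ hint₂ L_Q hL_Q Q hLip LpBC LBC ΔL c ΔQ hLpBC hLBC hΔL hc hΔQ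
end

section
/- For every s ∈ S, ‖π₊(s) − π(s)‖² ≤ (c∞ + √(c∞² + Δ∞))². Consequently x∞ := sup over s of ‖π₊(s) − π(s)‖² satisfies x∞ ≤ (c∞ + √(c∞² + Δ∞))². (This is the sup-norm version of the upper bound, Lemma 3 of the paper.) -/
/-- Sup-norm version of the upper bound (Lemma 3 of the paper): pointwise,
`‖π₊(s) − π(s)‖² ≤ (c∞ + √(c∞² + Δ∞))²`, and consequently the supremum
`x∞ = ⨆ s, ‖π₊(s) − π(s)‖²` satisfies the same bound. -/
theorem stmt_6
    {S : Type*} {H : Type*} [NormedAddCommGroup H] [NormedSpace ℝ H]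
    (πp πt πβ : S → H)
    (cinf Δinf : ℝ) (hcinf : 0 ≤ cinf) (hΔinf : 0 ≤ Δinf)
    (hc : ∀ s, ‖πt s - πβ s‖ ≤ cinf)
    (hΔ : ∀ s, |‖πp s - πβ s‖ ^ 2 - ‖πt s - πβ s‖ ^ 2| ≤ Δinf) :
    (∀ s, ‖πp s - πt s‖ ^ 2 ≤ (cinf + Real.sqrt (cinf ^ 2 + Δinf)) ^ 2) ∧
    (⨆ s, ‖πp s - πt s‖ ^ 2) ≤ (cinf + Real.sqrt (cinf ^ 2 + Δinf)) ^ 2 := by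
  have hsq : 0 ≤ Real.sqrt (cinf ^ 2 + Δinf) := Real.sqrt_nonneg _
  have hpt : ∀ s, ‖πp s - πt s‖ ^ 2 ≤ (cinf + Real.sqrt (cinf ^ 2 + Δinf)) ^ 2 := by
    intro s
    have h1 : ‖πp s - πβ s‖ ^ 2 ≤ cinf ^ 2 + Δinf := by
      have := abs_le.1 (hΔ s)
      have hc2 : ‖πt s - πβ s‖ ^ 2 ≤ cinf ^ 2 :=
        pow_le_pow_left₀ (norm_nonneg _) (hc s) 2
      linarith [this.2]
    have h2 : ‖πp s - πβ s‖ ≤ Real.sqrt (cinf ^ 2 + Δinf) := by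
      have := Real.sqrt_le_sqrt h1
      rwa [Real.sqrt_sq (norm_nonneg _)] at this
    have h3 : ‖πp s - πt s‖ ≤ cinf + Real.sqrt (cinf ^ 2 + Δinf) := by
      calc ‖πp s - πt s‖ = ‖(πp s - πβ s) - (πt s - πβ s)‖ := by rw [sub_sub_sub_cancel_right]
        _ ≤ ‖πp s - πβ s‖ + ‖πt s - πβ s‖ := norm_sub_le _ _
        _ ≤ cinf + Real.sqrt (cinf ^ 2 + Δinf) := by linarith [hc s, h2]
    exact pow_le_pow_left₀ (norm_nonneg _) h3 2
  exact ⟨hpt, Real.iSup_le hpt (by positivity)⟩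
end

section
/- Under the stated assumptions, ∫ (Q(s, π₊(s)) − Q(s, π(s))) dν(s) ≥ ΔQ − C·L_P·L_Q·(3·c∞² + 3·c∞·√(c∞² + Δ∞) + Δ∞). (This is the measure-theoretic core of Proposition 2: the single-step lower bound before multiplying by 1/(1−γ) and before invoking the performance-difference identity.) -/
/-!
Write `f s = Q(s, π₊ s) - Q(s, π s)`. By the Lipschitz bound and the triangle inequality through
`π_β s`, `|f| ≤ L_Q (B + c∞)` with `B = √(c∞² + Δ∞)`, which also bounds `‖π₊ - π_β‖`. Splitting
`ν - μ` into its Jordan parts `ν - μ` and `μ - ν` (as measures) gives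
`|∫ f dν - ∫ f dμ| ≤ sup |f| · ‖ν - μ‖₁ ≤ L_Q (B + c∞) · C L_P B`, and
`(B + c∞) B = c∞² + Δ∞ + c∞ B` is dominated by `3 c∞² + 3 c∞ B + Δ∞`.
-/

open MeasureTheory Real

namespace MeasureTheory.Measure

variable {α : Type*} [MeasurableSpace α] {μ ν : Measure α} [IsFiniteMeasure μ] [IsFiniteMeasure ν]

theorem add_sub_eq_add_sub : ν + (μ - ν) = μ + (ν - μ) := by
  have h := sub_toSignedMeasure_eq_toSignedMeasure_sub (μ := ν) (ν := μ)
  rw [sub_eq_sub_iff_add_eq_add] at h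
  rw [← toSignedMeasure_eq_toSignedMeasure_iff, toSignedMeasure_add, toSignedMeasure_add, h,
    add_comm]

theorem integral_sub_integral_eq {f : α → ℝ} (hμ : Integrable f μ) (hν : Integrable f ν) :
    ∫ x, f x ∂ν - ∫ x, f x ∂μ = ∫ x, f x ∂(ν - μ) - ∫ x, f x ∂(μ - ν) := by
  have h : ∫ x, f x ∂(ν + (μ - ν)) = ∫ x, f x ∂(μ + (ν - μ)) := by rw [add_sub_eq_add_sub]
  rw [integral_add_measure hν (hμ.mono_measure sub_le),
    integral_add_measure hμ (hν.mono_measure sub_le)] at h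
  linarith

theorem totalVariation_toSignedMeasure_sub :
    (ν.toSignedMeasure - μ.toSignedMeasure).totalVariation = (ν - μ) + (μ - ν) := by
  simp [SignedMeasure.totalVariation, jordanDecompositionOfToSignedMeasureSub]

theorem abs_integral_sub_integral_le {f : α → ℝ} {K : ℝ} (hμ : Integrable f μ)
    (hν : Integrable f ν) (hf : ∀ x, |f x| ≤ K) :
    |∫ x, f x ∂ν - ∫ x, f x ∂μ|
      ≤ K * ((ν.toSignedMeasure - μ.toSignedMeasure).totalVariation Set.univ).toReal := by
  have bound (m : Measure α) [IsFiniteMeasure m] : |∫ x, f x ∂m| ≤ K * m.real Set.univ := by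
    simpa [mul_comm] using norm_integral_le_of_norm_le_const (μ := m) (f := f) (.of_forall hf)
  rw [integral_sub_integral_eq hμ hν, totalVariation_toSignedMeasure_sub,
    ← measureReal_def, measureReal_add_apply, mul_add]
  exact (abs_sub _ _).trans (add_le_add (bound _) (bound _))

end MeasureTheory.Measure

theorem le_sqrt_of_abs_sq_sub_sq_le {x y c Δ : ℝ} (hy₀ : 0 ≤ y) (hy : y ≤ c)
    (h : |x ^ 2 - y ^ 2| ≤ Δ) : x ≤ √(c ^ 2 + Δ) := by
  have hyc : y ^ 2 ≤ c ^ 2 := pow_le_pow_left₀ hy₀ hy 2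
  exact le_sqrt_of_sq_le (by linarith [(abs_le.mp h).2])

theorem stmt_8_general
    {S : Type*} [MeasurableSpace S]
    {H : Type*} [NormedAddCommGroup H] [NormedSpace ℝ H]
    (μ ν : Measure S) [IsProbabilityMeasure μ] [IsProbabilityMeasure ν]
    (πp πt πβ : S → H)
    (L_Q : ℝ) (hL_Q : 0 < L_Q)
    (Q : S → H → ℝ)
    (hLip : ∀ s a₁ a₂, |Q s a₁ - Q s a₂| ≤ L_Q * ‖a₁ - a₂‖)
    (hintμ : Integrable (fun s => Q s (πp s) - Q s (πt s)) μ)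
    (hintν : Integrable (fun s => Q s (πp s) - Q s (πt s)) ν)
    (ΔQ : ℝ) (hΔQ : ΔQ = ∫ s, (Q s (πp s) - Q s (πt s)) ∂μ)
    (cinf Δinf : ℝ) (hcinf : 0 ≤ cinf) (hΔinf : 0 ≤ Δinf)
    (hc : ∀ s, ‖πt s - πβ s‖ ≤ cinf)
    (hΔ : ∀ s, |‖πp s - πβ s‖ ^ 2 - ‖πt s - πβ s‖ ^ 2| ≤ Δinf)
    (C L_P : ℝ) (hC : 0 < C) (hL_P : 0 < L_P)
    (hTV : ((ν.toSignedMeasure - μ.toSignedMeasure).totalVariation Set.univ).toReal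
      ≤ C * L_P * ⨆ s, ‖πp s - πβ s‖) :
    (∫ s, (Q s (πp s) - Q s (πt s)) ∂ν) ≥
      ΔQ - C * L_P * L_Q *
        (3 * cinf ^ 2 + 3 * cinf * Real.sqrt (cinf ^ 2 + Δinf) + Δinf) := by
  set B := √(cinf ^ 2 + Δinf)
  have hB : B ^ 2 = cinf ^ 2 + Δinf := sq_sqrt (by positivity)
  have hdev (s : S) : ‖πp s - πβ s‖ ≤ B :=
    le_sqrt_of_abs_sq_sub_sq_le (norm_nonneg _) (hc s) (hΔ s)
  have hgap (s : S) : |Q s (πp s) - Q s (πt s)| ≤ L_Q * (B + cinf) :=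
    calc |Q s (πp s) - Q s (πt s)| ≤ L_Q * ‖πp s - πt s‖ := hLip _ _ _
      _ ≤ L_Q * (‖πp s - πβ s‖ + ‖πt s - πβ s‖) := by
        gcongr; simpa only [dist_eq_norm] using dist_triangle_right (πp s) (πt s) (πβ s)
      _ ≤ L_Q * (B + cinf) := by gcongr; exacts [hdev s, hc s]
  have : Nonempty S := nonempty_of_isProbabilityMeasure μ
  have hTVB := hTV.trans (mul_le_mul_of_nonneg_left (ciSup_le hdev) (by positivity))
  have hshift := (abs_le.mp (Measure.abs_integral_sub_integral_le hintμ hintν hgap)).1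
  have hpoly : (B + cinf) * B ≤ 3 * cinf ^ 2 + 3 * cinf * B + Δinf := by
    nlinarith [sqrt_nonneg (cinf ^ 2 + Δinf)]
  calc ∫ s, (Q s (πp s) - Q s (πt s)) ∂ν
      ≥ ΔQ - L_Q * (B + cinf)
          * ((ν.toSignedMeasure - μ.toSignedMeasure).totalVariation Set.univ).toReal := by
        rw [hΔQ]; linarith
    _ ≥ ΔQ - L_Q * (B + cinf) * (C * L_P * B) := by gcongr
    _ = ΔQ - C * L_P * L_Q * ((B + cinf) * B) := by ring
    _ ≥ ΔQ - C * L_P * L_Q * (3 * cinf ^ 2 + 3 * cinf * B + Δinf) := by gcongr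

/-- Measure-theoretic core of Proposition 2: the single-step lower bound
`∫ (Q(s,π₊(s)) − Q(s,π(s))) dν ≥ ΔQ − C·L_P·L_Q·(3·c∞² + 3·c∞·√(c∞² + Δ∞) + Δ∞)`. -/
theorem stmt_8
    {S : Type*} [MeasurableSpace S]
    {H : Type*} [NormedAddCommGroup H] [NormedSpace ℝ H]
    [MeasurableSpace H] [BorelSpace H]
    (μ ν : Measure S) [IsProbabilityMeasure μ] [IsProbabilityMeasure ν]
    (πp πt πβ : S → H)
    (hπp : Measurable πp) (hπ : Measurable πt) (hπβ : Measurable πβ)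
    (L_Q : ℝ) (hL_Q : 0 < L_Q)
    (Q : S → H → ℝ)
    (hLip : ∀ s a₁ a₂, |Q s a₁ - Q s a₂| ≤ L_Q * ‖a₁ - a₂‖)
    (M : ℝ) (hbdd : ∀ s, |Q s (πp s) - Q s (πt s)| ≤ M)
    (hmeas : Measurable (fun s => Q s (πp s) - Q s (πt s)))
    (hintμ : Integrable (fun s => Q s (πp s) - Q s (πt s)) μ)
    (hintν : Integrable (fun s => Q s (πp s) - Q s (πt s)) ν)
    (ΔQ : ℝ) (hΔQ : ΔQ = ∫ s, (Q s (πp s) - Q s (πt s)) ∂μ)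
    (cinf Δinf : ℝ) (hcinf : 0 ≤ cinf) (hΔinf : 0 ≤ Δinf)
    (hc : ∀ s, ‖πt s - πβ s‖ ≤ cinf)
    (hΔ : ∀ s, |‖πp s - πβ s‖ ^ 2 - ‖πt s - πβ s‖ ^ 2| ≤ Δinf)
    (C L_P : ℝ) (hC : 0 < C) (hL_P : 0 < L_P)
    (hsupfin : BddAbove (Set.range fun s => ‖πp s - πβ s‖))
    (hTV : ((ν.toSignedMeasure - μ.toSignedMeasure).totalVariation Set.univ).toReal
      ≤ C * L_P * ⨆ s, ‖πp s - πβ s‖) :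
    (∫ s, (Q s (πp s) - Q s (πt s)) ∂ν) ≥
      ΔQ - C * L_P * L_Q *
        (3 * cinf ^ 2 + 3 * cinf * Real.sqrt (cinf ^ 2 + Δinf) + Δinf) :=
  stmt_8_general μ ν πp πt πβ L_Q hL_Q Q hLip hintμ hintν ΔQ hΔQ cinf Δinf hcinf hΔinf hc hΔ C L_P
    hC hL_P hTV
end
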